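/- Let S be a system of paths labeled by A ⊂ ℕ and let i ∈ A. Path i appears on the upper envelope of S if and only if some initial segment of the local sequence of path i contains every element of A_i^+ = {j ∈ A : j > i} an odd number of times and every element of A_i^- = {j ∈ A : j < i} an even number of times. The analogous statement holds for the lower envelope with the roles of A_i^+ and A_i^- interchanged. -/

import Mathlib

noncomputable section

/-- A function `g` changes sign at `t`. -/
def SignChangeAt (g : ℝ → ℝ) (t : ℝ) : Prop :=
  ∃ ε > (0 : ℝ),
    ((∀ s ∈ Set.Ioo (t - ε) t, g s < 0) ∧ (∀ s ∈ Set.Ioo t (t + ε), 0 < g s)) ∨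
    ((∀ s ∈ Set.Ioo (t - ε) t, 0 < g s) ∧ (∀ s ∈ Set.Ioo t (t + ε), g s < 0))

/-- A system of at least three paths (graphs of continuous functions on `[0,1]`):
distinct endpoints, finite pairwise intersections, all of which are crossings,
and no triple intersection points. -/
structure PathSystem (m : ℕ) where
  f : Fin m → ℝ → ℝ
  size_ge : 3 ≤ m
  cont : ∀ i, ContinuousOn (f i) (Set.Icc 0 1)
  endpoints0 : ∀ i j : Fin m, i ≠ j → f i 0 ≠ f j 0
  endpoints1 : ∀ i j : Fin m, i ≠ j → f i 1 ≠ f j 1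
  finite_meet : ∀ i j : Fin m, i ≠ j → {t : ℝ | t ∈ Set.Icc (0:ℝ) 1 ∧ f i t = f j t}.Finite
  crossing : ∀ i j : Fin m, i ≠ j → ∀ t ∈ Set.Icc (0:ℝ) 1, f i t = f j t →
      SignChangeAt (fun s => f i s - f j s) t
  no_triple : ∀ i j k : Fin m, i ≠ j → i ≠ k → j ≠ k → ∀ t ∈ Set.Icc (0:ℝ) 1,
      ¬(f i t = f j t ∧ f i t = f k t)

/-- The set of parameters where paths `i` and `j` of the system meet (= cross). -/
def meetSet {m : ℕ} (S : PathSystem m) (i j : Fin m) : Set ℝ :=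
  {t : ℝ | t ∈ Set.Icc (0:ℝ) 1 ∧ S.f i t = S.f j t}

/-- Each pair of paths crosses at least once and at most `k` times. -/
def KCrossing {m : ℕ} (S : PathSystem m) (k : ℕ) : Prop :=
  ∀ i j : Fin m, i ≠ j → 1 ≤ (meetSet S i j).ncard ∧ (meetSet S i j).ncard ≤ k

/-- Path `i` appears on the upper envelope of the system. -/
def OnUpperEnv {m : ℕ} (S : PathSystem m) (i : Fin m) : Prop :=
  ∃ t ∈ Set.Icc (0:ℝ) 1, ∀ j : Fin m, j ≠ i → S.f j t < S.f i t

/-- Path `i` appears on the lower envelope of the system. -/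
def OnLowerEnv {m : ℕ} (S : PathSystem m) (i : Fin m) : Prop :=
  ∃ t ∈ Set.Icc (0:ℝ) 1, ∀ j : Fin m, j ≠ i → S.f i t < S.f j t

/-- The subsystem of `S` on the index set `s` is upper convex. -/
def UpperConvexOn {m : ℕ} (S : PathSystem m) (s : Finset (Fin m)) : Prop :=
  ∀ i ∈ s, ∃ t ∈ Set.Icc (0:ℝ) 1, ∀ j ∈ s, j ≠ i → S.f j t < S.f i t

/-- The subsystem of `S` on the index set `s` is lower convex. -/
def LowerConvexOn {m : ℕ} (S : PathSystem m) (s : Finset (Fin m)) : Prop :=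
  ∀ i ∈ s, ∃ t ∈ Set.Icc (0:ℝ) 1, ∀ j ∈ s, j ≠ i → S.f i t < S.f j t

/-- The three-letter ordered alphabet `x ≺ y ≺ z` used for signatures. -/
inductive XYZ : Type
  | x | y | z
deriving DecidableEq

/-- The signature of the size-3 subsystem on paths `i, j, k`, where the labels are
ordered by the values at `0` (bottom to top): the word on `{x,y,z}` listing the
crossings from left to right, `x` for an `{i,j}`-crossing, `y` for an `{i,k}`-crossing
and `z` for a `{j,k}`-crossing. -/
noncomputable def signature3 {m : ℕ} (S : PathSystem m) (i j k : Fin m)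
    (h1 : S.f i 0 < S.f j 0) (h2 : S.f j 0 < S.f k 0) : List XYZ :=
  (Finset.sort
      (((S.finite_meet i j (by intro h; subst h; exact lt_irrefl _ h1)).toFinset ∪
        (S.finite_meet i k (by intro h; subst h; exact lt_irrefl _ (h1.trans h2))).toFinset) ∪
        (S.finite_meet j k (by intro h; subst h; exact lt_irrefl _ h2)).toFinset) (· ≤ ·)).map
    (fun t => if S.f i t = S.f j t then XYZ.x else if S.f i t = S.f k t then XYZ.y else XYZ.z)

/-- `σ` is the common (nonempty) signature of all size-3 subsystems of `S`. -/
def RegularSig {m : ℕ} (S : PathSystem m) (σ : List XYZ) : Prop :=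
  σ ≠ [] ∧ ∀ (i j k : Fin m) (h1 : S.f i 0 < S.f j 0) (h2 : S.f j 0 < S.f k 0),
    signature3 S i j k h1 h2 = σ

/-- A regular system: size at least 4, and all size-3 subsystems have the same
nonempty signature. -/
def IsRegularSystem {m : ℕ} (S : PathSystem m) : Prop :=
  4 ≤ m ∧ ∃ σ : List XYZ, RegularSig S σ

/-- A system labeled by `[m]`: indices increase with the order of the left endpoints. -/
structure LabeledPathSystem (m : ℕ) extends PathSystem m where
  mono0 : ∀ i j : Fin m, i < j → f i 0 < f j 0

/-- Signature of the size-3 subsystem on `i < j < k` of a labeled system. -/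
noncomputable def lsig {m : ℕ} (S : LabeledPathSystem m) (i j k : Fin m)
    (h1 : i < j) (h2 : j < k) : List XYZ :=
  signature3 S.toPathSystem i j k (S.mono0 i j h1) (S.mono0 j k h2)

/-- `σ` is the common nonempty signature of all size-3 subsystems of the labeled
system `S`. -/
def SystemSignatureL {m : ℕ} (S : LabeledPathSystem m) (σ : List XYZ) : Prop :=
  σ ≠ [] ∧ ∀ (i j k : Fin m) (h1 : i < j) (h2 : j < k), lsig S i j k h1 h2 = σ

/-- The signature of a labeled system of three paths. -/
noncomputable def sig3 (S : LabeledPathSystem 3) : List XYZ :=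
  lsig S 0 1 2 (by decide) (by decide)

/-- The set of parameters where path `i` meets some other path. -/
def crossTimes {m : ℕ} (S : PathSystem m) (i : Fin m) : Set ℝ :=
  {t : ℝ | t ∈ Set.Icc (0:ℝ) 1 ∧ ∃ j : Fin m, j ≠ i ∧ S.f j t = S.f i t}

lemma crossTimes_finite {m : ℕ} (S : PathSystem m) (i : Fin m) :
    (crossTimes S i).Finite := by
  have hsub : crossTimes S i ⊆
      ⋃ j : Fin m, {t : ℝ | (t ∈ Set.Icc (0:ℝ) 1 ∧ S.f j t = S.f i t) ∧ j ≠ i} := by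
    rintro t ⟨ht, j, hj, he⟩
    exact Set.mem_iUnion.2 ⟨j, ⟨ht, he⟩, hj⟩
  refine Set.Finite.subset (Set.finite_iUnion fun j => ?_) hsub
  by_cases hj : j = i
  · subst hj
    have h0 : {t : ℝ | (t ∈ Set.Icc (0:ℝ) 1 ∧ S.f j t = S.f j t) ∧ j ≠ j} = ∅ := by
      ext t; simp
    rw [h0]; exact Set.finite_empty
  · exact (S.finite_meet j i hj).subset fun t ht => ht.1

/-- The local sequence of path `i`: the labels of the other paths in the order in
which path `i` meets them from left to right. -/
noncomputable def localSeq {m : ℕ} (S : PathSystem m) (i : Fin m) : List (Fin m) :=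
  (Finset.sort (crossTimes_finite S i).toFinset (· ≤ ·)).map fun t =>
    if h : ∃ j : Fin m, j ≠ i ∧ S.f j t = S.f i t then h.choose else i

/-- The tableau associated to a labeled system: row `r` (for `1 ≤ r ≤ m`) is the
local sequence of path `r` written with the (1-based) labels. -/
noncomputable def assocTab {m : ℕ} (S : LabeledPathSystem m) : ℕ → List ℕ :=
  fun r => if h : 1 ≤ r ∧ r ≤ m then
      (localSeq S.toPathSystem ⟨r - 1, by omega⟩).map (fun j => (j : ℕ) + 1)
    else []

/-- A nonempty word on `{x,y,z}` is irreducible if no nonempty proper prefix contains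
equally many `x`'s, `y`'s and `z`'s. -/
def IrreducibleXYZ (σ : List XYZ) : Prop :=
  σ ≠ [] ∧ ∀ p : ℕ, 0 < p → p < σ.length →
    ¬((σ.take p).count XYZ.x = (σ.take p).count XYZ.y ∧
      (σ.take p).count XYZ.y = (σ.take p).count XYZ.z)

/-! For `j ≠ i` the difference `f j - f i` is continuous with finitely many zeros, each a sign
change, so by the intermediate value theorem path `j` is on the same side of path `i` at a
non-crossing time `t` as at time `0` exactly when the two paths cross an even number of times
before `t`. The prefixes of the local sequence of `i` are exactly the lists of crossings before
such times `t`, so the parity condition on a prefix says that at the corresponding time every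
path lies below `i`. The lower envelope is the upper envelope of the reflected system `-f`. -/

open Set

theorem Finset.countP_sort {α : Type*} (r : α → α → Prop) [DecidableRel r] [IsTrans α r]
    [Std.Antisymm r] [Std.Total r] (s : Finset α) (p : α → Prop) [DecidablePred p] :
    (s.sort r).countP (fun a => decide (p a)) = (s.filter p).card := by
  rw [← Multiset.coe_countP, Finset.sort_eq, Multiset.countP_eq_card_filter]
  rfl

theorem List.Pairwise.filter_lt_eq_take {α : Type*} [LinearOrder α] {L : List α}
    (hL : L.Pairwise (· ≤ ·)) (t : α) :
    L.filter (· < t) = L.take (L.countP (· < t)) := by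
  induction L with
  | nil => rfl
  | cons x xs ih =>
    by_cases hx : x < t
    · simp [hx, ih hL.of_cons]
    · have hall : ∀ y ∈ x :: xs, ¬ y < t := by
        rintro y (_ | ⟨_, hy⟩) hyt
        exacts [hx hyt, hx ((List.rel_of_pairwise_cons hL hy).trans_lt hyt)]
      rw [List.filter_eq_nil_iff.2 (by simpa using hall),
        List.countP_eq_zero.2 (by simpa using hall), List.take_zero]

theorem List.Pairwise.exists_filter_lt_eq_take {α : Type*} [LinearOrder α] [DenselyOrdered α]
    {L : List α} (hL : L.Pairwise (· < ·)) {a b : α} (hab : a < b)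
    (hmem : ∀ x ∈ L, x ∈ Ioo a b) (p : ℕ) :
    ∃ t ∈ Ioo a b, t ∉ L ∧ L.filter (· < t) = L.take p := by
  induction L generalizing a p with
  | nil =>
    obtain ⟨t, ht⟩ := exists_between hab
    exact ⟨t, ht, List.not_mem_nil, by simp⟩
  | cons x xs ih =>
    have hx := hmem x List.mem_cons_self
    have hxs : ∀ y ∈ xs, x < y := fun _ => List.rel_of_pairwise_cons hL
    cases p with
    | zero =>
      obtain ⟨t, hat, htx⟩ := exists_between hx.1
      refine ⟨t, ⟨hat, htx.trans hx.2⟩, ?_, ?_⟩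
      · simp only [List.mem_cons, not_or]
        exact ⟨htx.ne, fun h => (htx.trans (hxs t h)).false⟩
      · simp only [List.take_zero, List.filter_eq_nil_iff, decide_eq_true_eq, not_lt]
        rintro y (_ | ⟨_, hy⟩)
        exacts [htx.le, (htx.trans (hxs y hy)).le]
    | succ p =>
      obtain ⟨t, ⟨hxt, htb⟩, htxs, hfilter⟩ :=
        ih hL.of_cons hx.2 (fun y hy => ⟨hxs y hy, (hmem y (List.mem_cons_of_mem x hy)).2⟩) p
      refine ⟨t, ⟨hx.1.trans hxt, htb⟩, ?_, ?_⟩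
      · simp only [List.mem_cons, not_or]
        exact ⟨hxt.ne', htxs⟩
      · simp [hxt, hfilter]

theorem sign_iff_of_forall_ne_zero {g : ℝ → ℝ} {a b : ℝ} (hab : a ≤ b)
    (hg : ContinuousOn g (Icc a b)) (ha : g a ≠ 0) (hb : g b ≠ 0)
    (hne : ∀ s ∈ Ioo a b, g s ≠ 0) :
    g a < 0 ↔ g b < 0 := by
  have hne' : ∀ s ∈ Icc a b, g s ≠ 0 := fun s hs => by
    rcases eq_endpoints_or_mem_Ioo_of_mem_Icc hs with rfl | rfl | hs
    exacts [ha, hb, hne s hs]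
  have no_sign_change : ∀ x ∈ Icc a b, ∀ y ∈ Icc a b, g x < 0 → ¬ 0 < g y := by
    intro x hx y hy hgx hgy
    obtain ⟨s, hs, hgs⟩ := isPreconnected_Icc.intermediate_value hx hy hg ⟨hgx.le, hgy.le⟩
    exact hne' s hs hgs
  have ha' : a ∈ Icc a b := left_mem_Icc.2 hab
  have hb' : b ∈ Icc a b := right_mem_Icc.2 hab
  exact ⟨fun h => hb.lt_or_gt.resolve_right (no_sign_change a ha' b hb' h),
    fun h => ha.lt_or_gt.resolve_right (no_sign_change b hb' a ha' h)⟩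

theorem SignChangeAt.exists_opposite_sign {g : ℝ → ℝ} {z : ℝ} (h : SignChangeAt g z) :
    ∃ ε > 0, ∀ w ∈ Ioo (z - ε) z, ∀ c ∈ Ioo z (z + ε),
      g c ≠ 0 ∧ (g w < 0 ↔ ¬ g c < 0) := by
  obtain ⟨ε, hε, (⟨hleft, hright⟩ | ⟨hleft, hright⟩)⟩ := h
  · refine ⟨ε, hε, fun w hw c hc => ?_⟩
    have := hright c hc
    exact ⟨this.ne', iff_of_true (hleft w hw) this.not_gt⟩
  · refine ⟨ε, hε, fun w hw c hc => ?_⟩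
    have := hright c hc
    exact ⟨this.ne, iff_of_false (hleft w hw).not_gt (not_not.2 this)⟩

theorem even_ncard_zeros_iff {g : ℝ → ℝ} {a b : ℝ} (hab : a ≤ b)
    (hg : ContinuousOn g (Icc a b)) (hfin : {s ∈ Ioo a b | g s = 0}.Finite)
    (hsign : ∀ s ∈ Ioo a b, g s = 0 → SignChangeAt g s) (ha : g a ≠ 0) (hb : g b ≠ 0) :
    Even {s ∈ Ioo a b | g s = 0}.ncard ↔ (g a < 0 ↔ g b < 0) := by
  obtain ⟨n, hn⟩ : ∃ n, {s ∈ Ioo a b | g s = 0}.ncard = n := ⟨_, rfl⟩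
  induction n generalizing a with
  | zero =>
    have hempty := (Set.ncard_eq_zero hfin).1 hn
    exact iff_of_true (hn ▸ Even.zero)
      (sign_iff_of_forall_ne_zero hab hg ha hb fun s hs hgs => hempty.subset ⟨hs, hgs⟩)
  | succ n ih =>
    -- The sign of `g` is constant on `[a, z)` for the first zero `z`, flips across `z`, and the
    -- remaining zeros lie beyond any `c` close enough to the right of `z`.
    obtain ⟨z, ⟨⟨haz, hzb⟩, hgz⟩, hzmin⟩ :=
      Set.exists_min_image _ id hfin (Set.nonempty_of_ncard_ne_zero (by omega))
    have hnz : ∀ s ∈ Ioo a z, g s ≠ 0 := fun s hs hgs =>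
      (hzmin s ⟨⟨hs.1, hs.2.trans hzb⟩, hgs⟩).not_gt hs.2
    obtain ⟨ε, hε, hflip⟩ := (hsign z ⟨haz, hzb⟩ hgz).exists_opposite_sign
    obtain ⟨w, hw, hwz⟩ := exists_between (max_lt haz (sub_lt_self z hε))
    obtain ⟨c, hzc, hc⟩ := exists_between (lt_min hzb (lt_add_of_pos_right z hε))
    have haw : a < w := (le_max_left _ _).trans_lt hw
    have hcb : c < b := hc.trans_le (min_le_left _ _)
    have hflip_w := hflip w ⟨(le_max_right _ _).trans_lt hw, hwz⟩
    have hnz_right : ∀ s ∈ Ioc z c, g s ≠ 0 := fun s hs =>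
      (hflip_w s ⟨hs.1, hs.2.trans_lt (hc.trans_le (min_le_right _ _))⟩).1
    obtain ⟨hgc, hwc⟩ := hflip_w c ⟨hzc, hc.trans_le (min_le_right _ _)⟩
    have hsign_aw : g a < 0 ↔ g w < 0 :=
      sign_iff_of_forall_ne_zero haw.le (hg.mono (Icc_subset_Icc_right (hwz.trans hzb).le)) ha
        (hnz w ⟨haw, hwz⟩) fun s hs => hnz s ⟨hs.1, hs.2.trans hwz⟩
    have hzeros : {s ∈ Ioo c b | g s = 0} = {s ∈ Ioo a b | g s = 0} \ {z} := by
      ext s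
      simp only [mem_sdiff, mem_ofPred_eq, mem_Ioo, mem_singleton_iff]
      constructor
      · rintro ⟨⟨hcs, hsb⟩, hgs⟩
        exact ⟨⟨⟨haz.trans (hzc.trans hcs), hsb⟩, hgs⟩, (hzc.trans hcs).ne'⟩
      · rintro ⟨⟨⟨has, hsb⟩, hgs⟩, hsz⟩
        have hzs := (hzmin s ⟨⟨has, hsb⟩, hgs⟩).lt_of_ne' hsz
        exact ⟨⟨not_le.1 fun hsc => hnz_right s ⟨hzs, hsc⟩ hgs, hsb⟩, hgs⟩
    have hcard : {s ∈ Ioo c b | g s = 0}.ncard = n := by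
      have hz : z ∈ {s ∈ Ioo a b | g s = 0} := ⟨⟨haz, hzb⟩, hgz⟩
      rw [hzeros, Set.ncard_sdiff_singleton_of_mem hz, hn, Nat.add_sub_cancel]
    have hsub : Ioo c b ⊆ Ioo a b := Ioo_subset_Ioo_left (haz.trans hzc).le
    have ih_c := ih hcb.le (hg.mono (Icc_subset_Icc_left (haz.trans hzc).le))
      (hfin.subset fun s hs => ⟨hsub hs.1, hs.2⟩) (fun s hs => hsign s (hsub hs)) hgc hcard
    rw [hn, Nat.even_add_one, ← hcard, ih_c, hsign_aw, hwc]
    tauto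

theorem forall_odd_above_even_below_iff {ι : Type*} {x : ι → ℝ} {i : ι}
    (hx : ∀ j ≠ i, x j ≠ x i) (c : ι → ℕ) :
    ((∀ j, x i < x j → Odd (c j)) ∧ (∀ j, x j < x i → Even (c j))) ↔
      ∀ j ≠ i, (Even (c j) ↔ x j < x i) := by
  constructor
  · rintro ⟨hodd, heven⟩ j hj
    rcases (hx j hj).lt_or_gt with h | h
    · exact iff_of_true (heven j h) h
    · exact iff_of_false (Nat.not_even_iff_odd.2 (hodd j h)) h.not_gt
  · intro h
    refine ⟨fun j hj => ?_, fun j hj => (h j (ne_of_apply_ne x hj.ne)).2 hj⟩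
    rw [← Nat.not_even_iff_odd, h j (ne_of_apply_ne x hj.ne')]
    exact hj.not_gt

namespace PathSystem

variable {m : ℕ} (S : PathSystem m) (i : Fin m)

def crossSeq : List ℝ := Finset.sort (crossTimes_finite S i).toFinset (· ≤ ·)

theorem mem_crossSeq {t : ℝ} : t ∈ S.crossSeq i ↔ t ∈ crossTimes S i := by
  rw [crossSeq, Finset.mem_sort, Set.Finite.mem_toFinset]

theorem crossSeq_pairwise_lt : (S.crossSeq i).Pairwise (· < ·) :=
  (Finset.sortedLT_sort _).pairwise

theorem crossTimes_subset_Ioo : crossTimes S i ⊆ Ioo 0 1 := by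
  rintro t ⟨ht, j, hj, he⟩
  refine ⟨ht.1.lt_of_ne ?_, ht.2.lt_of_ne ?_⟩ <;> rintro rfl
  exacts [S.endpoints0 j i hj he, S.endpoints1 j i hj he]

theorem count_take_localSeq {j : Fin m} (hj : j ≠ i) (p : ℕ) :
    ((localSeq S i).take p).count j =
      ((S.crossSeq i).take p).countP fun s => S.f j s = S.f i s := by
  rw [localSeq, ← crossSeq, ← List.map_take, List.count_eq_countP, List.countP_map]
  refine List.countP_congr fun s hs => ?_
  obtain ⟨hs01, hex⟩ := (S.mem_crossSeq i).1 ((List.take_sublist p _).subset hs)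
  obtain ⟨hk, hks⟩ := hex.choose_spec
  simp only [Function.comp_apply, dif_pos hex, beq_iff_eq, decide_eq_true_eq]
  constructor
  · rintro rfl
    exact hks
  · intro hjs
    by_contra hne
    exact S.no_triple i _ j (Ne.symm hk) (Ne.symm hj) hne s hs01 ⟨hks.symm, hjs.symm⟩

theorem count_take_localSeq_eq_ncard {j : Fin m} (hj : j ≠ i) {p : ℕ} {t : ℝ} (ht : t ≤ 1)
    (hcut : (S.crossSeq i).filter (· < t) = (S.crossSeq i).take p) :
    ((localSeq S i).take p).count j = {s ∈ Ioo 0 t | S.f j s = S.f i s}.ncard := by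
  rw [count_take_localSeq S i hj, ← hcut, List.countP_filter]
  simp_rw [← Bool.decide_and]
  rw [crossSeq, Finset.countP_sort, ← Set.ncard_coe_finset]
  congr 1
  ext s
  simp only [Finset.coe_filter, Set.Finite.mem_toFinset, mem_ofPred_eq, mem_Ioo]
  constructor
  · rintro ⟨hs, hjs, hst⟩
    exact ⟨⟨(S.crossTimes_subset_Ioo i hs).1, hst⟩, hjs⟩
  · rintro ⟨⟨h0s, hst⟩, hjs⟩
    exact ⟨⟨⟨h0s.le, (hst.trans_le ht).le⟩, j, hj, hjs⟩, hjs, hst⟩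

theorem even_ncard_meet_iff {j : Fin m} (hj : j ≠ i) {t : ℝ} (ht : t ∈ Icc 0 1)
    (hjt : S.f j t ≠ S.f i t) :
    Even {s ∈ Ioo 0 t | S.f j s = S.f i s}.ncard ↔
      (S.f j 0 < S.f i 0 ↔ S.f j t < S.f i t) := by
  have hsub : Ioo 0 t ⊆ Icc 0 1 := Ioo_subset_Icc_self.trans (Icc_subset_Icc_right ht.2)
  have key := even_ncard_zeros_iff (g := fun s => S.f j s - S.f i s) ht.1
    (((S.cont j).sub (S.cont i)).mono (Icc_subset_Icc_right ht.2))
    ((S.finite_meet j i hj).subset fun s hs => ⟨hsub hs.1, sub_eq_zero.1 hs.2⟩)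
    (fun s hs hgs => S.crossing j i hj s (hsub hs) (sub_eq_zero.1 hgs))
    (sub_ne_zero.2 (S.endpoints0 j i hj)) (sub_ne_zero.2 hjt)
  simpa only [sub_eq_zero, sub_neg] using key

theorem exists_time_of_prefix (p : ℕ) :
    ∃ t ∈ Icc (0 : ℝ) 1, ∀ j ≠ i, S.f j t ≠ S.f i t ∧
      (Even (((localSeq S i).take p).count j) ↔ (S.f j 0 < S.f i 0 ↔ S.f j t < S.f i t)) := by
  obtain ⟨t, ht, htT, hcut⟩ := (S.crossSeq_pairwise_lt i).exists_filter_lt_eq_take zero_lt_one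
    (fun s hs => S.crossTimes_subset_Ioo i ((S.mem_crossSeq i).1 hs)) p
  have hne : ∀ j ≠ i, S.f j t ≠ S.f i t := fun j hj he =>
    htT ((S.mem_crossSeq i).2 ⟨Ioo_subset_Icc_self ht, j, hj, he⟩)
  refine ⟨t, Ioo_subset_Icc_self ht, fun j hj => ⟨hne j hj, ?_⟩⟩
  rw [S.count_take_localSeq_eq_ncard i hj ht.2.le hcut]
  exact S.even_ncard_meet_iff i hj (Ioo_subset_Icc_self ht) (hne j hj)

theorem exists_prefix_of_time {t : ℝ} (ht : t ∈ Icc 0 1)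
    (hne : ∀ j ≠ i, S.f j t ≠ S.f i t) :
    ∃ p : ℕ, ∀ j ≠ i,
      (Even (((localSeq S i).take p).count j) ↔ (S.f j 0 < S.f i 0 ↔ S.f j t < S.f i t)) := by
  have hcut := (List.Pairwise.imp le_of_lt (S.crossSeq_pairwise_lt i)).filter_lt_eq_take t
  refine ⟨(S.crossSeq i).countP (· < t), fun j hj => ?_⟩
  rw [S.count_take_localSeq_eq_ncard i hj ht.2 hcut]
  exact S.even_ncard_meet_iff i hj ht (hne j hj)

theorem onUpperEnv_iff_exists_prefix :
    OnUpperEnv S i ↔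
      ∃ p : ℕ, ∀ j ≠ i, (Even (((localSeq S i).take p).count j) ↔ S.f j 0 < S.f i 0) := by
  constructor
  · rintro ⟨t, ht, hbelow⟩
    obtain ⟨p, hp⟩ := S.exists_prefix_of_time i ht fun j hj => (hbelow j hj).ne
    exact ⟨p, fun j hj => by rw [hp j hj, iff_true_right (hbelow j hj)]⟩
  · rintro ⟨p, hp⟩
    obtain ⟨t, ht, htp⟩ := S.exists_time_of_prefix i p
    refine ⟨t, ht, fun j hj => ?_⟩
    have hsame := (hp j hj).symm.trans (htp j hj).2
    tauto

theorem onUpperEnv_iff_localSeq :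
    OnUpperEnv S i ↔ ∃ p : ℕ,
        (∀ j : Fin m, S.f i 0 < S.f j 0 → Odd (((localSeq S i).take p).count j)) ∧
        (∀ j : Fin m, S.f j 0 < S.f i 0 → Even (((localSeq S i).take p).count j)) :=
  (S.onUpperEnv_iff_exists_prefix i).trans <| exists_congr fun _ =>
    (forall_odd_above_even_below_iff (S.endpoints0 · i ·) _).symm

def neg : PathSystem m where
  f j t := -S.f j t
  size_ge := S.size_ge
  cont j := (S.cont j).neg
  endpoints0 j k h := by simpa only [ne_eq, neg_inj] using S.endpoints0 j k h
  endpoints1 j k h := by simpa only [ne_eq, neg_inj] using S.endpoints1 j k h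
  finite_meet j k h := by simpa only [neg_inj] using S.finite_meet j k h
  crossing j k h t ht he := by
    simpa only [neg_sub_neg] using S.crossing k j h.symm t ht (neg_inj.1 he).symm
  no_triple j k l hjk hjl hkl t ht := by
    simpa only [neg_inj] using S.no_triple j k l hjk hjl hkl t ht

@[simp]
theorem neg_f (j : Fin m) (t : ℝ) : S.neg.f j t = -S.f j t := rfl

theorem localSeq_neg : localSeq S.neg i = localSeq S i := by
  simp only [localSeq, crossTimes, neg_f, neg_inj]

theorem onUpperEnv_neg : OnUpperEnv S.neg i ↔ OnLowerEnv S i := by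
  simp only [OnUpperEnv, OnLowerEnv, neg_f, neg_lt_neg_iff]

end PathSystem

/-- **Lemma (envelopes from local sequences).** Path `i` appears on the upper
envelope iff some initial segment of its local sequence contains every path above
`i` an odd number of times and every path below `i` an even number of times; and
analogously for the lower envelope with the roles interchanged.  (Labels increase
with the order of the left endpoints, so `j` is above `i` iff `S.f i 0 < S.f j 0`.) -/
theorem onEnv_iff_localSeq (m : ℕ) (S : PathSystem m) (i : Fin m) :
    (OnUpperEnv S i ↔ ∃ p : ℕ,
        (∀ j : Fin m, S.f i 0 < S.f j 0 → Odd (((localSeq S i).take p).count j)) ∧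
        (∀ j : Fin m, S.f j 0 < S.f i 0 → Even (((localSeq S i).take p).count j))) ∧
    (OnLowerEnv S i ↔ ∃ p : ℕ,
        (∀ j : Fin m, S.f j 0 < S.f i 0 → Odd (((localSeq S i).take p).count j)) ∧
        (∀ j : Fin m, S.f i 0 < S.f j 0 → Even (((localSeq S i).take p).count j))) := by
  refine ⟨S.onUpperEnv_iff_localSeq i, ?_⟩
  simpa only [S.onUpperEnv_neg, S.localSeq_neg, PathSystem.neg_f, neg_lt_neg_iff] using
    S.neg.onUpperEnv_iff_localSeq i
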